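/- (Proposition 3.5, Gagliardo–Nirenberg interpolation inequalities on closed curves, finite p.) Let m ≥ 1, n ∈ {0,…,m−1} and p ∈ [2,∞), and set σ = (n + 1/2 − 1/p)/m ∈ [0,1). There exist constants C, B > 0 depending only on n, m, p (and not on the curve γ or on u) such that for every smooth regular closed plane curve γ and every smooth 2π-periodic function u : ℝ → ℝ, (∫_γ |∂ₛⁿ u|^p ds)^{1/p} ≤ C (∫_γ |∂ₛᵐ u|² ds)^{σ/2} (∫_γ u² ds)^{(1−σ)/2} + B L^{−mσ} (∫_γ u² ds)^{1/2}. -/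

import Mathlib

open Real MeasureTheory

noncomputable section

abbrev E2 : Type := EuclideanSpace ℝ (Fin 2)

/-- Counterclockwise rotation by `π/2`: `R(a,b) = (-b,a)`. -/
def rot (v : E2) : E2 := WithLp.toLp 2 ![-(v 1), v 0]

/-- Arclength derivative `∂ₛ = |γ'|⁻¹ ∂ₓ` along `γ`. -/
def aD {F : Type*} [NormedAddCommGroup F] [NormedSpace ℝ F]
    (γ : ℝ → E2) (f : ℝ → F) : ℝ → F :=
  fun x => (‖deriv γ x‖)⁻¹ • deriv f x

/-- Iterated arclength derivative `∂ₛⁿ` on scalar functions. -/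
def aDn (γ : ℝ → E2) (n : ℕ) : (ℝ → ℝ) → (ℝ → ℝ) :=
  (fun g => aD γ g)^[n]

/-- Unit tangent `τ = ∂ₛ γ`. -/
def tau (γ : ℝ → E2) : ℝ → E2 := aD γ γ

/-- Unit normal `ν = R τ`. -/
def nu (γ : ℝ → E2) : ℝ → E2 := fun x => rot (tau γ x)

/-- Curvature `κ = ⟨∂ₛ τ, ν⟩`. -/
def curv (γ : ℝ → E2) : ℝ → ℝ :=
  fun x => (inner ℝ (aD γ (tau γ) x) (nu γ x) : ℝ)

/-- Integration with respect to arclength: `∫_γ f ds = ∫₀^{2π} f(x) |γ'(x)| dx`. -/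
def Ig (γ : ℝ → E2) (f : ℝ → ℝ) : ℝ :=
  ∫ x in (0:ℝ)..(2 * π), f x * ‖deriv γ x‖

/-- Length of `γ`. -/
def len (γ : ℝ → E2) : ℝ := Ig γ fun _ => 1

/-- `γ` is a smooth regular closed plane curve (2π-periodic). -/
structure IsClosedCurve (γ : ℝ → E2) : Prop where
  smooth : ContDiff ℝ (⊤ : ℕ∞) γ
  periodic : Function.Periodic γ (2 * π)
  regular : ∀ x, deriv γ x ≠ 0

open scoped ContDiff
open intervalIntegral

lemma seq1 (a : ℕ → ℝ) (hnn : ∀ k, 0 ≤ a k) (hlc : ∀ k, a (k+1)^2 ≤ a k * a (k+2)) :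
    ∀ i k, a (i+1) * a (i+k) ≤ a i * a (i+k+1) := by
  intro i k
  induction k with
  | zero => simp [mul_comm]
  | succ k ih =>
    have h2 := hlc (i+k)
    rcases (hnn (i+k+1)).eq_or_lt with h | h
    · calc a (i+1) * a (i+(k+1)) = a (i+1) * a (i+k+1) := by ring_nf
        _ = 0 := by rw [← h, mul_zero]
        _ ≤ a i * a (i+(k+1)+1) := mul_nonneg (hnn i) (hnn _)
    · have goal : a (i+1) * a (i+k+1) ≤ a i * a (i+k+2) := by
        have step1 : a (i+1) * a (i+k+1) * a (i+k+1) ≤ a (i+1) * (a (i+k) * a (i+k+2)) := by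
          have := mul_le_mul_of_nonneg_left h2 (hnn (i+1))
          calc a (i+1) * a (i+k+1) * a (i+k+1) = a (i+1) * a (i+k+1)^2 := by ring
            _ ≤ a (i+1) * (a (i+k) * a (i+k+2)) := this
        have step2 : a (i+1) * (a (i+k) * a (i+k+2)) ≤ a i * a (i+k+2) * a (i+k+1) := by
          have := mul_le_mul_of_nonneg_right ih (hnn (i+k+2))
          calc a (i+1) * (a (i+k) * a (i+k+2)) = a (i+1) * a (i+k) * a (i+k+2) := by ring
            _ ≤ a i * a (i+k+1) * a (i+k+2) := this
            _ = a i * a (i+k+2) * a (i+k+1) := by ring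
        exact le_of_mul_le_mul_right (step1.trans step2) h
      calc a (i+1) * a (i+(k+1)) = a (i+1) * a (i+k+1) := by ring_nf
        _ ≤ a i * a (i+k+2) := goal
        _ = a i * a (i+(k+1)+1) := by ring_nf

lemma seq2 (a : ℕ → ℝ) (hnn : ∀ k, 0 ≤ a k) (hlc : ∀ k, a (k+1)^2 ≤ a k * a (k+2)) :
    ∀ i k, a (i+1) ^ (k+1) ≤ a i ^ k * a (i+k+1) := by
  intro i k
  induction k with
  | zero => simp
  | succ k ih =>
    have h3' : a (i+1) * a (i+k+1) ≤ a i * a (i+k+2) := by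
      have := seq1 a hnn hlc i (k+1)
      calc a (i+1) * a (i+k+1) = a (i+1) * a (i+(k+1)) := by ring_nf
        _ ≤ a i * a (i+(k+1)+1) := this
        _ = a i * a (i+k+2) := by ring_nf
    calc a (i+1) ^ (k+1+1) = a (i+1) ^ (k+1) * a (i+1) := by ring
      _ ≤ (a i ^ k * a (i+k+1)) * a (i+1) := mul_le_mul_of_nonneg_right ih (hnn _)
      _ = a i ^ k * (a (i+1) * a (i+k+1)) := by ring
      _ ≤ a i ^ k * (a i * a (i+k+2)) :=
          mul_le_mul_of_nonneg_left h3' (pow_nonneg (hnn i) k)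
      _ = a i ^ (k+1) * a (i+(k+1)+1) := by ring_nf
      _ = a i ^ (k+1) * a (i+k+2) := by ring_nf

lemma seq3 (a : ℕ → ℝ) (hnn : ∀ k, 0 ≤ a k) (hlc : ∀ k, a (k+1)^2 ≤ a k * a (k+2)) :
    ∀ k j, a k ^ (k + j) ≤ a 0 ^ j * a (k + j) ^ k := by
  intro k
  induction k with
  | zero => intro j; simp [le_of_eq, pow_nonneg (hnn 0)]
  | succ k ih =>
    intro j
    have h1 : a (k+1) ^ (j+1) ≤ a k ^ j * a (k+j+1) := seq2 a hnn hlc k j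
    have h2' : a k ^ (k+j+1) ≤ a 0 ^ (j+1) * a (k+j+1) ^ k := by
      have := ih (j+1)
      calc a k ^ (k+j+1) = a k ^ (k+(j+1)) := by ring_nf
        _ ≤ a 0 ^ (j+1) * a (k+(j+1)) ^ k := this
        _ = a 0 ^ (j+1) * a (k+j+1) ^ k := by ring_nf
    set B := a (k+j+1) with hB
    have hBnn : 0 ≤ B := hnn _
    have key : (a (k+1) ^ (k+1+j)) ^ (j+1) ≤ (a 0 ^ j * B ^ (k+1)) ^ (j+1) := by
      calc (a (k+1) ^ (k+1+j)) ^ (j+1) = (a (k+1) ^ (j+1)) ^ (k+j+1) := by ring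
        _ ≤ (a k ^ j * B) ^ (k+j+1) := pow_le_pow_left₀ (pow_nonneg (hnn _) _) h1 _
        _ = (a k ^ (k+j+1)) ^ j * B ^ (k+j+1) := by ring
        _ ≤ (a 0 ^ (j+1) * B ^ k) ^ j * B ^ (k+j+1) :=
            mul_le_mul_of_nonneg_right
              (pow_le_pow_left₀ (pow_nonneg (hnn k) _) h2' _) (pow_nonneg hBnn _)
        _ = (a 0 ^ j * B ^ (k+1)) ^ (j+1) := by ring
    have final : a (k+1) ^ (k+1+j) ≤ a 0 ^ j * B ^ (k+1) :=
      (pow_le_pow_iff_left₀ (pow_nonneg (hnn (k+1)) (k+1+j))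
        (mul_nonneg (pow_nonneg (hnn 0) j) (pow_nonneg hBnn (k+1))) (Nat.succ_ne_zero j)).mp key
    calc a (k+1) ^ (k+1+j) ≤ a 0 ^ j * B ^ (k+1) := final
      _ = a 0 ^ j * a (k+1+j) ^ (k+1) := by rw [hB]; ring_nf





lemma periodic_deriv {F : Type*} [NormedAddCommGroup F] [NormedSpace ℝ F]
    {f : ℝ → F} {T : ℝ} (hf : Function.Periodic f T) :
    Function.Periodic (deriv f) T := by
  intro x
  have : (fun y => f (y + T)) = f := funext fun y => hf y
  rw [← deriv_comp_add_const f T x, this]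

section curve

variable {γ : ℝ → E2} (hγ : IsClosedCurve γ)
include hγ

lemma w_contDiff : ContDiff ℝ ∞ (fun x => ‖deriv γ x‖) := by
  have hd : ContDiff ℝ ∞ (deriv γ) :=
    (contDiff_infty_iff_deriv.mp (hγ.smooth.of_le (by simp))).2
  exact hd.norm ℝ hγ.regular

lemma w_pos (x : ℝ) : 0 < ‖deriv γ x‖ := norm_pos_iff.mpr (hγ.regular x)

lemma w_cont : Continuous (fun x => ‖deriv γ x‖) := (w_contDiff hγ).continuous

lemma w_periodic : Function.Periodic (fun x => ‖deriv γ x‖) (2 * π) := by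
  intro x
  show ‖deriv γ (x + 2*π)‖ = ‖deriv γ x‖
  rw [periodic_deriv hγ.periodic x]

lemma aD_contDiff {f : ℝ → ℝ} (hf : ContDiff ℝ ∞ f) :
    ContDiff ℝ ∞ (aD γ f) := by
  have hd : ContDiff ℝ ∞ (deriv f) := (contDiff_infty_iff_deriv.mp hf).2
  exact ((w_contDiff hγ).inv (fun x => (w_pos hγ x).ne')).smul hd

lemma aD_periodic {f : ℝ → ℝ} (hf : Function.Periodic f (2 * π)) :
    Function.Periodic (aD γ f) (2 * π) := by
  intro x
  show (‖deriv γ (x + 2*π)‖)⁻¹ • deriv f (x + 2*π) = _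
  rw [periodic_deriv hγ.periodic x, periodic_deriv hf x]
  rfl

omit hγ in
lemma aDn_succ (n : ℕ) (u : ℝ → ℝ) : aDn γ (n+1) u = aD γ (aDn γ n u) :=
  Function.iterate_succ_apply' _ n u

lemma aDn_contDiff {u : ℝ → ℝ} (hu : ContDiff ℝ ∞ u) (n : ℕ) :
    ContDiff ℝ ∞ (aDn γ n u) := by
  induction n with
  | zero => exact hu
  | succ n ih => rw [aDn_succ]; exact aD_contDiff hγ ih

lemma aDn_periodic {u : ℝ → ℝ} (hu : Function.Periodic u (2 * π)) (n : ℕ) :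
    Function.Periodic (aDn γ n u) (2 * π) := by
  induction n with
  | zero => exact hu
  | succ n ih => rw [aDn_succ]; exact aD_periodic hγ ih

omit hγ in
lemma two_pi_pos' : (0:ℝ) < 2 * π := by positivity

omit hγ in
lemma Ig_nonneg {f : ℝ → ℝ} (hf : ∀ x, 0 ≤ f x) : 0 ≤ Ig γ f :=
  intervalIntegral.integral_nonneg (le_of_lt two_pi_pos') fun x _ =>
    mul_nonneg (hf x) (norm_nonneg _)

lemma len_pos : 0 < len γ := by
  unfold len Ig
  apply intervalIntegral.intervalIntegral_pos_of_pos
  · exact (continuous_const.mul (w_cont hγ)).intervalIntegrable 0 (2*π)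
  · intro x; simpa using w_pos hγ x
  · exact two_pi_pos'

lemma Ig_mono {f g : ℝ → ℝ} (hf : Continuous f) (hg : Continuous g)
    (h : ∀ x ∈ Set.Icc 0 (2*π), f x ≤ g x) : Ig γ f ≤ Ig γ g := by
  unfold Ig
  apply intervalIntegral.integral_mono_on (le_of_lt two_pi_pos')
    ((hf.mul (w_cont hγ)).intervalIntegrable _ _)
    ((hg.mul (w_cont hγ)).intervalIntegrable _ _)
  intro x hx
  exact mul_le_mul_of_nonneg_right (h x hx) (norm_nonneg _)

/-- Integration by parts on the closed curve. -/
lemma ibp {f g : ℝ → ℝ} (hf : ContDiff ℝ ∞ f) (hg : ContDiff ℝ ∞ g)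
    (hfp : Function.Periodic f (2 * π)) (hgp : Function.Periodic g (2 * π)) :
    Ig γ (fun x => aD γ f x * g x) = - Ig γ (fun x => f x * aD γ g x) := by
  have hL : ∀ x, (aD γ f x * g x) * ‖deriv γ x‖ = deriv f x * g x := by
    intro x
    simp only [aD, smul_eq_mul]
    field_simp [(w_pos hγ x).ne']
  have hR : ∀ x, (f x * aD γ g x) * ‖deriv γ x‖ = f x * deriv g x := by
    intro x
    simp only [aD, smul_eq_mul]
    field_simp [(w_pos hγ x).ne']
  have hdf : Continuous (deriv f) := (contDiff_infty_iff_deriv.mp hf).2.continuous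
  have hdg : Continuous (deriv g) := (contDiff_infty_iff_deriv.mp hg).2.continuous
  have key : (∫ x in (0:ℝ)..(2*π), deriv f x * g x + f x * deriv g x)
      = f (2*π) * g (2*π) - f 0 * g 0 := by
    apply intervalIntegral.integral_deriv_mul_eq_sub
    · intro x _
      exact ((hf.differentiable (by simp)).differentiableAt).hasDerivAt
    · intro x _
      exact ((hg.differentiable (by simp)).differentiableAt).hasDerivAt
    · exact hdf.intervalIntegrable _ _
    · exact hdg.intervalIntegrable _ _
  have hzero : f (2*π) * g (2*π) - f 0 * g 0 = 0 := by
    have h1 : f (2*π) = f 0 := by have := hfp 0; simpa using this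
    have h2 : g (2*π) = g 0 := by have := hgp 0; simpa using this
    rw [h1, h2]; ring
  have hsplit : (∫ x in (0:ℝ)..(2*π), deriv f x * g x + f x * deriv g x)
      = (∫ x in (0:ℝ)..(2*π), deriv f x * g x) + ∫ x in (0:ℝ)..(2*π), f x * deriv g x := by
    apply intervalIntegral.integral_add
    · exact (hdf.mul hg.continuous).intervalIntegrable _ _
    · exact (hf.continuous.mul hdg).intervalIntegrable _ _
  have e1 : Ig γ (fun x => aD γ f x * g x) = ∫ x in (0:ℝ)..(2*π), deriv f x * g x := by
    unfold Ig; exact intervalIntegral.integral_congr (fun x _ => hL x)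
  have e2 : Ig γ (fun x => f x * aD γ g x) = ∫ x in (0:ℝ)..(2*π), f x * deriv g x := by
    unfold Ig; exact intervalIntegral.integral_congr (fun x _ => hR x)
  rw [e1, e2]
  have := key
  rw [hsplit, hzero] at this
  linarith

/-- Cauchy–Schwarz. -/
lemma cs {f g : ℝ → ℝ} (hf : Continuous f) (hg : Continuous g) :
    (Ig γ (fun x => |f x * g x|)) ^ 2 ≤ Ig γ (fun x => f x ^ 2) * Ig γ (fun x => g x ^ 2) := by
  set F := fun x => |f x|
  set G := fun x => |g x|
  have hF : Continuous F := hf.abs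
  have hG : Continuous G := hg.abs
  set IFF := Ig γ (fun x => f x ^ 2) with hIFF
  set IGG := Ig γ (fun x => g x ^ 2) with hIGG
  set IFG := Ig γ (fun x => |f x * g x|) with hIFG
  have key : ∀ t : ℝ, 0 ≤ IGG * (t * t) + (2 * IFG) * t + IFF := by
    intro t
    have expand : Ig γ (fun x => (F x + t * G x)^2)
        = IGG * (t * t) + (2 * IFG) * t + IFF := by
      have ptw : ∀ x, ((F x + t * G x)^2) * ‖deriv γ x‖
          = (f x ^2 * ‖deriv γ x‖) + (t * (2 * (|f x * g x| * ‖deriv γ x‖))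
            + t * (t * (g x ^2 * ‖deriv γ x‖))) := by
        intro x
        have h1 : |f x * g x| = |f x| * |g x| := abs_mul _ _
        simp only [F, G]
        rw [h1, ← sq_abs (f x), ← sq_abs (g x)]
        ring
      have i1 : IntervalIntegrable (fun x => f x ^2 * ‖deriv γ x‖) volume 0 (2*π) :=
        ((hf.pow 2).mul (w_cont hγ)).intervalIntegrable _ _
      have i2 : IntervalIntegrable (fun x => t * (2 * (|f x * g x| * ‖deriv γ x‖))) volume 0 (2*π) :=
        (continuous_const.mul (continuous_const.mul (((hf.mul hg).abs).mul (w_cont hγ)))).intervalIntegrable _ _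
      have i3 : IntervalIntegrable (fun x => t * (t * (g x ^2 * ‖deriv γ x‖))) volume 0 (2*π) :=
        (continuous_const.mul (continuous_const.mul ((hg.pow 2).mul (w_cont hγ)))).intervalIntegrable _ _
      unfold Ig
      rw [intervalIntegral.integral_congr (fun x _ => ptw x)]
      rw [intervalIntegral.integral_add i1 (i2.add i3), intervalIntegral.integral_add i2 i3]
      rw [intervalIntegral.integral_const_mul, intervalIntegral.integral_const_mul,
        intervalIntegral.integral_const_mul, intervalIntegral.integral_const_mul]
      rw [hIFF, hIFG, hIGG]
      unfold Ig
      ring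
    have h0 : 0 ≤ Ig γ (fun x => (F x + t * G x)^2) := Ig_nonneg fun x => sq_nonneg _
    rw [expand] at h0
    exact h0
  have hd := discrim_le_zero key
  unfold discrim at hd
  have h4 : (2*IFG)^2 = 4*IFG^2 := by ring
  rw [h4] at hd
  linarith

end curve

section curve2
variable {γ : ℝ → E2} (hγ : IsClosedCurve γ)
include hγ

lemma meanval {f : ℝ → ℝ} (hf : Continuous f) :
    ∃ y ∈ Set.Icc (0:ℝ) (2*π), f y ^ 2 * len γ ≤ Ig γ (fun x => f x ^ 2) := by
  by_contra hcon
  push_neg at hcon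
  set A := Ig γ (fun x => f x ^ 2) / len γ with hA
  have hL := len_pos hγ
  have hint : (∫ x in (0:ℝ)..(2*π), (f x ^ 2 - A) * ‖deriv γ x‖) = 0 := by
    have hsplit : (∫ x in (0:ℝ)..(2*π), (f x ^ 2 - A) * ‖deriv γ x‖)
        = Ig γ (fun x => f x ^ 2) - A * len γ := by
      unfold Ig len Ig
      beta_reduce
      rw [← intervalIntegral.integral_const_mul, ← intervalIntegral.integral_sub
        (f := fun x => f x ^ 2 * ‖deriv γ x‖) (g := fun x => A * (1 * ‖deriv γ x‖))
        (((hf.pow 2).mul (w_cont hγ)).intervalIntegrable _ _)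
        ((continuous_const.mul (continuous_const.mul (w_cont hγ))).intervalIntegrable _ _)]
      apply intervalIntegral.integral_congr
      intro x _
      ring
    rw [hsplit, hA, div_mul_cancel₀ _ (ne_of_gt hL)]
    ring
  have hpos : 0 < ∫ x in (0:ℝ)..(2*π), (f x ^ 2 - A) * ‖deriv γ x‖ := by
    apply intervalIntegral.intervalIntegral_pos_of_pos_on
    · exact (((hf.pow 2).sub continuous_const).mul (w_cont hγ)).intervalIntegrable _ _
    · intro x hx
      have hx' : x ∈ Set.Icc (0:ℝ) (2*π) := Set.mem_Icc_of_Ioo hx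
      have := hcon x hx'
      have hfx : A < f x ^ 2 := by
        rw [hA, div_lt_iff₀ hL]; linarith
      exact mul_pos (by linarith) (w_pos hγ x)
    · exact two_pi_pos'
  rw [hint] at hpos
  exact lt_irrefl 0 hpos

lemma sup_sq {f : ℝ → ℝ} (hf : ContDiff ℝ ∞ f) (hfp : Function.Periodic f (2 * π)) :
    ∀ x ∈ Set.Icc (0:ℝ) (2*π), f x ^ 2
      ≤ Ig γ (fun x => f x ^ 2) / len γ + 2 * Ig γ (fun x => |f x * aD γ f x|) := by
  intro x hx
  obtain ⟨y, hy, hyle⟩ := meanval hγ hf.continuous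
  have hL := len_pos hγ
  have h1 : f y ^ 2 ≤ Ig γ (fun x => f x ^ 2) / len γ := (le_div_iff₀ hL).mpr hyle
  have hdf : Continuous (deriv f) := (contDiff_infty_iff_deriv.mp hf).2.continuous
  set g := fun t => 2 * f t * deriv f t with hg
  have hgc : Continuous g := (continuous_const.mul hf.continuous).mul hdf
  have ftc : (∫ t in y..x, g t) = f x ^ 2 - f y ^ 2 := by
    apply intervalIntegral.integral_eq_sub_of_hasDerivAt
    · intro t _
      have hd : HasDerivAt f (deriv f t) t :=
        ((hf.differentiable (by simp)).differentiableAt).hasDerivAt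
      have := hd.pow 2
      simp only [Nat.cast_ofNat, pow_one, show (2:ℕ) - 1 = 1 from rfl] at this
      exact this
    · exact hgc.intervalIntegrable _ _
  have habs : |∫ t in y..x, g t| ≤ ∫ t in (0:ℝ)..(2*π), |g t| := by
    have hmono : ∀ a b : ℝ, a ≤ b → a ∈ Set.Icc (0:ℝ) (2*π) → b ∈ Set.Icc (0:ℝ) (2*π) →
        |∫ t in a..b, g t| ≤ ∫ t in (0:ℝ)..(2*π), |g t| := by
      intro a b hab ha hb
      refine (intervalIntegral.abs_integral_le_integral_abs hab).trans ?_
      exact intervalIntegral.integral_mono_interval ha.1 hab hb.2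
        (Filter.Eventually.of_forall fun t => abs_nonneg _)
        (hgc.abs.intervalIntegrable _ _)
    rcases le_total y x with h | h
    · exact hmono y x h hy hx
    · rw [intervalIntegral.integral_symm, abs_neg]
      exact hmono x y h hx hy
  have hgabs : (∫ t in (0:ℝ)..(2*π), |g t|) = 2 * Ig γ (fun t => |f t * aD γ f t|) := by
    unfold Ig
    rw [← intervalIntegral.integral_const_mul]
    apply intervalIntegral.integral_congr
    intro t _
    have hw := w_pos hγ t
    have hderiv : deriv f t = ‖deriv γ t‖ * aD γ f t := by
      simp only [aD, smul_eq_mul]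
      field_simp
    rw [hg]
    simp only []
    rw [hderiv, abs_mul, abs_mul, abs_mul, abs_of_pos hw,
      abs_of_nonneg (by norm_num : (0:ℝ) ≤ 2), abs_mul]
    ring
  have : f x ^ 2 = f y ^ 2 + ∫ t in y..x, g t := by rw [ftc]; ring
  rw [this]
  have h2 : (∫ t in y..x, g t) ≤ |∫ t in y..x, g t| := le_abs_self _
  rw [hgabs] at habs
  linarith

end curve2

lemma real_rpow_add_le {x y e : ℝ} (hx : 0 ≤ x) (hy : 0 ≤ y) (he : 0 ≤ e) (he1 : e ≤ 1) :
    (x + y) ^ e ≤ x ^ e + y ^ e := by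
  lift x to NNReal using hx
  lift y to NNReal using hy
  have := NNReal.rpow_add_le_add_rpow x y he he1
  have h2 := NNReal.coe_le_coe.mpr this
  push_cast [NNReal.coe_rpow] at h2
  exact_mod_cast h2

section curve3
variable {γ : ℝ → E2} (hγ : IsClosedCurve γ)
include hγ

omit hγ in
lemma Ig_const_mul (c : ℝ) (h : ℝ → ℝ) : Ig γ (fun x => c * h x) = c * Ig γ h := by
  unfold Ig
  rw [← intervalIntegral.integral_const_mul]
  apply intervalIntegral.integral_congr
  intro x _
  ring

set_option maxHeartbeats 2000000 in
theorem main_est (n m : ℕ) (hm : 1 ≤ m) (hnm : n < m) (p : ℝ) (hp : 2 ≤ p)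
    (u : ℝ → ℝ) (hu' : ContDiff ℝ (⊤ : ℕ∞) u) (hup : Function.Periodic u (2 * π)) :
    (Ig γ (fun x => |aDn γ n u x| ^ p)) ^ (1 / p)
      ≤ 3 * (Ig γ (fun x => (aDn γ m u x) ^ 2)) ^ ((((n : ℝ) + 1/2 - 1/p) / m) / 2)
          * (Ig γ (fun x => (u x) ^ 2)) ^ ((1 - ((n : ℝ) + 1/2 - 1/p) / m) / 2)
        + 1 * (len γ) ^ (-((m : ℝ) * ((((n : ℝ) + 1/2 - 1/p)) / m)))
          * (Ig γ (fun x => (u x) ^ 2)) ^ ((1 : ℝ) / 2) := by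
  have hu : ContDiff ℝ ∞ u := hu'.of_le (by simp)
  have hL : 0 < len γ := len_pos hγ
  have hp0 : (0:ℝ) < p := lt_of_lt_of_le two_pos hp
  have hpne : p ≠ 0 := ne_of_gt hp0
  have hmR : (0:ℝ) < (m:ℝ) := by exact_mod_cast hm
  have hmne : (m:ℝ) ≠ 0 := ne_of_gt hmR
  set L : ℝ := len γ with hLdef
  set σ : ℝ := ((n:ℝ) + 1/2 - 1/p) / m with hσ
  set e : ℝ := 1/2 - 1/p with he
  have he0 : 0 ≤ e := by
    rw [he]
    have : 1/p ≤ 1/2 := by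
      rw [div_le_div_iff₀ hp0 two_pos]; linarith
    linarith
  have he1 : e ≤ 1 := by
    rw [he]
    have : 0 < 1/p := by positivity
    linarith
  have hmσ : (m:ℝ) * σ = (n:ℝ) + e := by
    rw [hσ, he]; field_simp; ring
  have hσ0 : 0 ≤ σ := by
    rw [hσ]
    apply div_nonneg _ (le_of_lt hmR)
    have : 1/p ≤ 1/2 := by rw [div_le_div_iff₀ hp0 two_pos]; linarith
    linarith [Nat.cast_nonneg (α := ℝ) n]
  have hσ1 : σ < 1 := by
    rw [hσ, div_lt_one hmR]
    have h1 : (n:ℝ) + 1 ≤ (m:ℝ) := by exact_mod_cast hnm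
    have : 0 < 1/p := by positivity
    linarith
  -- the sequence of L² norms
  have hdc : ∀ k, ContDiff ℝ ∞ (aDn γ k u) := fun k => aDn_contDiff hγ hu k
  have hdp : ∀ k, Function.Periodic (aDn γ k u) (2 * π) := fun k => aDn_periodic hγ hup k
  set I : ℕ → ℝ := fun k => Ig γ (fun x => (aDn γ k u x)^2) with hI
  have hInn : ∀ k, 0 ≤ I k := fun k => Ig_nonneg fun x => sq_nonneg _
  set a : ℕ → ℝ := fun k => (I k) ^ ((1:ℝ)/2) with ha
  have hann : ∀ k, 0 ≤ a k := fun k => Real.rpow_nonneg (hInn k) _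
  have hasq : ∀ k, a k ^ 2 = I k := by
    intro k
    rw [ha]
    rw [← Real.rpow_natCast ((I k) ^ ((1:ℝ)/2)) 2, ← Real.rpow_mul (hInn k)]
    norm_num
  have csab : ∀ j k : ℕ, Ig γ (fun x => |aDn γ j u x * aDn γ k u x|) ≤ a j * a k := by
    intro j k
    have h2 := cs hγ (hdc j).continuous (hdc k).continuous
    have hnnfg : 0 ≤ Ig γ (fun x => |aDn γ j u x * aDn γ k u x|) :=
      Ig_nonneg fun x => abs_nonneg _
    calc Ig γ (fun x => |aDn γ j u x * aDn γ k u x|)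
        = ((Ig γ (fun x => |aDn γ j u x * aDn γ k u x|))^2) ^ ((1:ℝ)/2) := by
          rw [← Real.rpow_natCast (Ig γ (fun x => |aDn γ j u x * aDn γ k u x|)) 2,
            ← Real.rpow_mul hnnfg]
          norm_num
      _ ≤ (I j * I k) ^ ((1:ℝ)/2) := Real.rpow_le_rpow (sq_nonneg _) h2 (by norm_num)
      _ = a j * a k := (Real.mul_rpow (hInn j) (hInn k))
  have chain : ∀ k, a (k+1)^2 ≤ a k * a (k+2) := by
    intro k
    rw [hasq]
    have e1 : I (k+1) = Ig γ (fun x => aD γ (aDn γ k u) x * aDn γ (k+1) u x) := by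
      rw [hI]
      simp only []
      congr 1
      funext x
      rw [aDn_succ]
      ring
    have e2 : Ig γ (fun x => aD γ (aDn γ k u) x * aDn γ (k+1) u x)
        = - Ig γ (fun x => aDn γ k u x * aD γ (aDn γ (k+1) u) x) :=
      ibp hγ (hdc k) (hdc (k+1)) (hdp k) (hdp (k+1))
    have e3 : aD γ (aDn γ (k+1) u) = aDn γ (k+2) u := (aDn_succ (k+1) u).symm
    have e4 : - Ig γ (fun x => aDn γ k u x * aDn γ (k+2) u x)
        ≤ Ig γ (fun x => |aDn γ k u x * aDn γ (k+2) u x|) := by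
      have hneg : Ig γ (fun x => -(aDn γ k u x * aDn γ (k+2) u x))
          = - Ig γ (fun x => aDn γ k u x * aDn γ (k+2) u x) := by
        have := Ig_const_mul (γ := γ) (-1) (fun x => aDn γ k u x * aDn γ (k+2) u x)
        simpa [neg_one_mul] using this
      rw [← hneg]
      apply Ig_mono hγ
      · exact ((hdc k).continuous.mul (hdc (k+2)).continuous).neg
      · exact ((hdc k).continuous.mul (hdc (k+2)).continuous).abs
      · intro x _
        exact neg_le_abs _
    calc I (k+1) = - Ig γ (fun x => aDn γ k u x * aDn γ (k+2) u x) := by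
          rw [e1, e2, e3]
      _ ≤ Ig γ (fun x => |aDn γ k u x * aDn γ (k+2) u x|) := e4
      _ ≤ a k * a (k+2) := csab k (k+2)
  set A0 : ℝ := a 0 with hA0
  set Am : ℝ := a m with hAm
  have interp : ∀ k, k ≤ m → a k ≤ A0 ^ (((m:ℝ)-(k:ℝ))/m) * Am ^ ((k:ℝ)/m) := by
    intro k hk
    have h := seq3 a hann chain k (m-k)
    rw [Nat.add_sub_cancel' hk] at h
    calc a k = ((a k ^ m : ℝ)) ^ ((1:ℝ)/m) := by
          rw [← Real.rpow_natCast (a k) m, ← Real.rpow_mul (hann k)]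
          rw [mul_one_div, div_self hmne, Real.rpow_one]
      _ ≤ (a 0 ^ (m-k) * a m ^ k) ^ ((1:ℝ)/m) :=
          Real.rpow_le_rpow (pow_nonneg (hann k) m) h (by positivity)
      _ = A0 ^ (((m:ℝ)-(k:ℝ))/m) * Am ^ ((k:ℝ)/m) := by
          rw [Real.mul_rpow (pow_nonneg (hann 0) _) (pow_nonneg (hann m) _)]
          rw [← Real.rpow_natCast (a 0) (m-k), ← Real.rpow_natCast (a m) k,
            ← Real.rpow_mul (hann 0), ← Real.rpow_mul (hann m)]
          rw [hA0, hAm]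
          congr 1
          · congr 1
            rw [Nat.cast_sub hk]
            field_simp
          · congr 1
            field_simp
  -- the sup bound
  set f : ℝ → ℝ := aDn γ n u with hf
  have hfc : Continuous f := (hdc n).continuous
  set FG : ℝ := Ig γ (fun x => |f x * aDn γ (n+1) u x|) with hFG
  have hFGnn : 0 ≤ FG := Ig_nonneg fun x => abs_nonneg _
  set K : ℝ := I n / L + 2 * FG with hK
  have hKnn : 0 ≤ K := by
    rw [hK]
    have : 0 ≤ I n / L := div_nonneg (hInn n) (le_of_lt hL)
    linarith
  have hsup : ∀ x ∈ Set.Icc (0:ℝ) (2*π), f x ^ 2 ≤ K := by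
    intro x hx
    have h := sup_sq hγ (hdc n) (hdp n) x hx
    rw [hK, hFG, hLdef]
    have e5 : aD γ (aDn γ n u) = aDn γ (n+1) u := (aDn_succ n u).symm
    rw [hf]
    calc aDn γ n u x ^2 ≤ Ig γ (fun x => aDn γ n u x ^ 2) / len γ
          + 2 * Ig γ (fun x => |aDn γ n u x * aD γ (aDn γ n u) x|) := h
      _ = Ig γ (fun x => aDn γ n u x ^ 2) / len γ
          + 2 * Ig γ (fun x => |aDn γ n u x * aDn γ (n+1) u x|) := by rw [e5]
  -- step 1 : Qn ≤ K^((p-2)/2) * I n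
  set Qn : ℝ := Ig γ (fun x => |f x| ^ p) with hQn
  have hQnnn : 0 ≤ Qn := Ig_nonneg fun x => Real.rpow_nonneg (abs_nonneg _) p
  have claim1 : Qn ≤ K ^ ((p-2)/2) * I n := by
    have hKp : 0 ≤ K ^ ((p-2)/2) := Real.rpow_nonneg hKnn _
    have hpt : ∀ x ∈ Set.Icc (0:ℝ) (2*π), |f x| ^ p ≤ K ^ ((p-2)/2) * (f x)^2 := by
      intro x hx
      have hfx2 : f x ^ 2 ≤ K := hsup x hx
      have habs : |f x| ≤ K ^ ((1:ℝ)/2) := by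
        have h1 : |f x| = ((f x)^2) ^ ((1:ℝ)/2) := by
          rw [← sq_abs, ← Real.rpow_natCast |f x| 2, ← Real.rpow_mul (abs_nonneg _)]
          norm_num
        rw [h1]
        exact Real.rpow_le_rpow (sq_nonneg _) hfx2 (by norm_num)
      rcases eq_or_lt_of_le (abs_nonneg (f x)) with h0 | h0
      · rw [← h0, Real.zero_rpow hpne]
        positivity
      · have hsplit : |f x| ^ p = |f x| ^ (p-2) * |f x| ^ (2:ℝ) := by
          rw [← Real.rpow_add h0]
          norm_num
        rw [hsplit]
        have hb1 : |f x| ^ (p-2) ≤ (K ^ ((1:ℝ)/2)) ^ (p-2) :=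
          Real.rpow_le_rpow (abs_nonneg _) habs (by linarith)
        have hb2 : (K ^ ((1:ℝ)/2)) ^ (p-2) = K ^ ((p-2)/2) := by
          rw [← Real.rpow_mul hKnn]
          congr 1
          ring
        have hb3 : |f x| ^ (2:ℝ) = (f x)^2 := by
          rw [show ((2:ℝ)) = ((2:ℕ):ℝ) by norm_num, Real.rpow_natCast, sq_abs]
        rw [hb3, ← hb2]
        exact mul_le_mul_of_nonneg_right hb1 (by rw [← hb3]; positivity)
    have := Ig_mono hγ (hfc.abs.rpow_const (fun x => Or.inr (le_of_lt hp0)))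
      (continuous_const.mul (hfc.pow 2)) hpt
    calc Qn ≤ Ig γ (fun x => K ^ ((p-2)/2) * (f x)^2) := this
      _ = K ^ ((p-2)/2) * I n := by rw [Ig_const_mul]
  -- step 2
  have i2p : (0:ℝ) < 2/p := by positivity
  have claim2 : Qn ^ (1/p) ≤ K ^ e * a n ^ (2/p) := by
    have h1 : Qn ^ (1/p) ≤ (K ^ ((p-2)/2) * I n) ^ (1/p) :=
      Real.rpow_le_rpow hQnnn claim1 (by positivity)
    have h2 : (K ^ ((p-2)/2) * I n) ^ (1/p)
        = K ^ e * a n ^ (2/p) := by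
      rw [Real.mul_rpow (Real.rpow_nonneg hKnn _) (hInn n)]
      congr 1
      · rw [← Real.rpow_mul hKnn]
        congr 1
        rw [he]
        field_simp
      · rw [ha]
        rw [← Real.rpow_mul (hInn n)]
        congr 1
        field_simp
    rw [← h2]
    exact h1
  have claim3 : K ^ e ≤ (I n / L) ^ e + (2 * FG) ^ e := by
    rw [hK]
    exact real_rpow_add_le (div_nonneg (hInn n) (le_of_lt hL))
      (by linarith) he0 he1
  have hT : Qn ^ (1/p) ≤ (I n / L) ^ e * a n ^ (2/p) + (2*FG) ^ e * a n ^ (2/p) := by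
    have hr : 0 ≤ a n ^ (2/p) := Real.rpow_nonneg (hann n) _
    calc Qn ^ (1/p) ≤ K ^ e * a n ^ (2/p) := claim2
      _ ≤ ((I n / L) ^ e + (2*FG) ^ e) * a n ^ (2/p) :=
          mul_le_mul_of_nonneg_right claim3 hr
      _ = (I n / L) ^ e * a n ^ (2/p) + (2*FG) ^ e * a n ^ (2/p) := by ring
  -- Term 1 simplification : (I n / L)^e * a n^(2/p) = L^(-e) * a n
  have hT1 : (I n / L) ^ e * a n ^ (2/p) = L ^ (-e) * a n := by
    rw [Real.div_rpow (hInn n) (le_of_lt hL)]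
    have h1 : (I n) ^ e = a n ^ (2*e) := by
      rw [ha, ← Real.rpow_mul (hInn n)]
      congr 1
      ring
    have h3 : 2*e + 2/p = 1 := by rw [he]; field_simp; ring
    have h2 : a n ^ (2*e) * a n ^ (2/p) = a n ^ (2*e + 2/p) :=
      (Real.rpow_add' (hann n) (by rw [h3]; norm_num)).symm
    have h4 : (1:ℝ)/ L ^ e = L ^ (-e) := by
      rw [Real.rpow_neg (le_of_lt hL)]
      ring
    calc (I n)^e / L^e * a n ^ (2/p)
        = (a n ^ (2*e) * a n ^ (2/p)) / L^e := by rw [h1]; ring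
      _ = a n ^ (2*e+2/p) / L^e := by rw [h2]
      _ = a n / L^e := by rw [h3, Real.rpow_one]
      _ = L ^ (-e) * a n := by
          rw [Real.rpow_neg (le_of_lt hL)]
          ring
  -- interpolation bounds
  have hXn : a n ≤ A0 ^ (((m:ℝ)-(n:ℝ))/m) * Am ^ ((n:ℝ)/m) := interp n (le_of_lt hnm)
  have hXn1 : a (n+1) ≤ A0 ^ (((m:ℝ)-((n:ℝ)+1))/m) * Am ^ (((n:ℝ)+1)/m) := by
    have h := interp (n+1) hnm
    push_cast at h
    exact h
  set q : ℝ := e + 2/p with hq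
  have hqpos : 0 < q := by rw [hq]; positivity
  set X1 : ℝ := A0 ^ (((m:ℝ)-(n:ℝ))/m) * Am ^ ((n:ℝ)/m) with hX1
  set X2 : ℝ := A0 ^ (((m:ℝ)-((n:ℝ)+1))/m) * Am ^ (((n:ℝ)+1)/m) with hX2
  have hX1nn : 0 ≤ X1 := mul_nonneg (Real.rpow_nonneg (hann 0) _) (Real.rpow_nonneg (hann m) _)
  have hX2nn : 0 ≤ X2 := mul_nonneg (Real.rpow_nonneg (hann 0) _) (Real.rpow_nonneg (hann m) _)
  set A' : ℝ := Am ^ σ * A0 ^ (1-σ) with hA'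
  have hA'nn : 0 ≤ A' := mul_nonneg (Real.rpow_nonneg (hann m) _) (Real.rpow_nonneg (hann 0) _)
  set B' : ℝ := L ^ (-((m:ℝ)*σ)) * A0 with hB'
  have hB'nn : 0 ≤ B' := mul_nonneg (Real.rpow_nonneg (le_of_lt hL) _) (hann 0)
  -- Term 2 bound
  have hT2 : (2*FG) ^ e * a n ^ (2/p) ≤ 2 * A' := by
    have hFGb : FG ≤ a n * a (n+1) := by
      rw [hFG, hf]
      exact csab n (n+1)
    have s1 : (2*FG) ^ e ≤ (2*(a n * a (n+1))) ^ e :=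
      Real.rpow_le_rpow (by positivity) (by linarith) he0
    have s2 : (2*(a n * a (n+1))) ^ e = 2 ^ e * a n ^ e * a (n+1) ^ e := by
      rw [Real.mul_rpow (by norm_num) (mul_nonneg (hann n) (hann (n+1))),
        Real.mul_rpow (hann n) (hann (n+1))]
      ring
    have s3 : (2*FG) ^ e * a n ^ (2/p) ≤ 2 ^ e * (a n ^ q * a (n+1) ^ e) := by
      have := mul_le_mul_of_nonneg_right s1 (Real.rpow_nonneg (hann n) (2/p))
      rw [s2] at this
      calc (2*FG) ^ e * a n ^ (2/p) ≤ 2 ^ e * a n ^ e * a (n+1) ^ e * a n ^ (2/p) := this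
        _ = 2 ^ e * ((a n ^ e * a n ^ (2/p)) * a (n+1) ^ e) := by ring
        _ = 2 ^ e * (a n ^ q * a (n+1) ^ e) := by
            rw [← Real.rpow_add' (hann n) (by rw [← hq]; exact ne_of_gt hqpos)]
    have s4 : a n ^ q * a (n+1) ^ e ≤ X1 ^ q * X2 ^ e :=
      mul_le_mul (Real.rpow_le_rpow (hann n) hXn (le_of_lt hqpos))
        (Real.rpow_le_rpow (hann (n+1)) hXn1 he0)
        (Real.rpow_nonneg (hann (n+1)) _) (Real.rpow_nonneg hX1nn _)
    have s5 : X1 ^ q * X2 ^ e = A0 ^ ((((m:ℝ)-(n:ℝ))/m)*q + (((m:ℝ)-((n:ℝ)+1))/m)*e)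
        * (Am ^ (((n:ℝ)/m)*q) * Am ^ ((((n:ℝ)+1)/m)*e)) := by
      rw [hX1, hX2]
      rw [Real.mul_rpow (Real.rpow_nonneg (hann 0) _) (Real.rpow_nonneg (hann m) _),
        Real.mul_rpow (Real.rpow_nonneg (hann 0) _) (Real.rpow_nonneg (hann m) _)]
      rw [← Real.rpow_mul (hann 0), ← Real.rpow_mul (hann m),
        ← Real.rpow_mul (hann 0), ← Real.rpow_mul (hann m)]
      rw [Real.rpow_add' (hann 0) (by
        rw [show (((m:ℝ)-(n:ℝ))/m)*q + (((m:ℝ)-((n:ℝ)+1))/m)*e = 1 - σ from by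
          rw [hq, hσ, he]; field_simp; ring]
        exact ne_of_gt (by linarith))]
      ring
    have hc1 : (((m:ℝ)-(n:ℝ))/m)*q + (((m:ℝ)-((n:ℝ)+1))/m)*e = 1 - σ := by
      rw [hq, hσ, he]; field_simp; ring
    have hc2 : ((n:ℝ)/m)*q + (((n:ℝ)+1)/m)*e = σ := by
      rw [hq, hσ, he]; field_simp; ring
    have s6 : Am ^ (((n:ℝ)/m)*q) * Am ^ ((((n:ℝ)+1)/m)*e) = Am ^ σ := by
      rcases eq_or_lt_of_le hσ0 with h0 | h0
      · have hsum0 : (n:ℝ) + e = 0 := by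
          rw [← hmσ, ← h0]; ring
        have hn0 : (n:ℝ) = 0 := by
          have := Nat.cast_nonneg (α := ℝ) n
          linarith
        have he00 : e = 0 := by linarith [Nat.cast_nonneg (α := ℝ) n]
        rw [← h0, hn0, he00]
        norm_num
      · rw [← Real.rpow_add' (hann m) (by rw [hc2]; exact ne_of_gt h0), hc2]
    have s7 : X1 ^ q * X2 ^ e = A0 ^ (1-σ) * Am ^ σ := by
      rw [s5, s6, hc1]
    have h2e : (2:ℝ) ^ e ≤ 2 := by
      calc (2:ℝ) ^ e ≤ 2 ^ (1:ℝ) := Real.rpow_le_rpow_of_exponent_le one_le_two he1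
        _ = 2 := Real.rpow_one 2
    calc (2*FG) ^ e * a n ^ (2/p) ≤ 2 ^ e * (a n ^ q * a (n+1) ^ e) := s3
      _ ≤ 2 ^ e * (X1 ^ q * X2 ^ e) := by
          apply mul_le_mul_of_nonneg_left s4 (Real.rpow_nonneg (by norm_num) _)
      _ = 2 ^ e * (A0 ^ (1-σ) * Am ^ σ) := by rw [s7]
      _ ≤ 2 * (A0 ^ (1-σ) * Am ^ σ) := by
          apply mul_le_mul_of_nonneg_right h2e
            (mul_nonneg (Real.rpow_nonneg (hann 0) _) (Real.rpow_nonneg (hann m) _))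
      _ = 2 * A' := by rw [hA']; ring
  -- Term 1 bound
  have hLe : (0:ℝ) < L ^ (-e) := Real.rpow_pos_of_pos hL _
  have hT1b : L ^ (-e) * a n ≤ A' + B' := by
    have step : L ^ (-e) * a n ≤ L ^ (-e) * X1 :=
      mul_le_mul_of_nonneg_left hXn (le_of_lt hLe)
    rcases Nat.eq_zero_or_pos n with hn0 | hn1
    · -- n = 0 : the term is exactly B'
      have hmσe : (m:ℝ)*σ = e := by rw [hmσ, hn0]; norm_num
      have hX1A0 : X1 = A0 := by
        rw [hX1, hn0]
        push_cast
        rw [sub_zero, div_self hmne, zero_div, Real.rpow_one, Real.rpow_zero, mul_one]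
      have : L ^ (-e) * X1 = B' := by
        rw [hB', hX1A0, hmσe]
      linarith
    · -- n ≥ 1 : AM-GM
      have hn1R : (1:ℝ) ≤ (n:ℝ) := by exact_mod_cast hn1
      have hmσpos : 0 < (m:ℝ)*σ := by rw [hmσ]; linarith
      have hσpos : 0 < σ := by
        rcases eq_or_lt_of_le hσ0 with h0 | h0
        · exfalso; rw [← h0, mul_zero] at hmσpos; exact lt_irrefl 0 hmσpos
        · exact h0
      set t : ℝ := (n:ℝ)/((m:ℝ)*σ) with ht
      have ht0 : 0 ≤ t := by rw [ht]; positivity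
      have ht1 : t ≤ 1 := by
        rw [ht, div_le_one hmσpos, hmσ]
        linarith
      have key : L ^ (-e) * X1 = A' ^ t * B' ^ (1-t) := by
        have eA : A' ^ t = Am ^ (σ*t) * A0 ^ ((1-σ)*t) := by
          rw [hA', Real.mul_rpow (Real.rpow_nonneg (hann m) _) (Real.rpow_nonneg (hann 0) _),
            ← Real.rpow_mul (hann m), ← Real.rpow_mul (hann 0)]
        have eB : B' ^ (1-t) = L ^ (-((m:ℝ)*σ)*(1-t)) * A0 ^ (1-t) := by
          rw [hB', Real.mul_rpow (Real.rpow_nonneg (le_of_lt hL) _) (hann 0),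
            ← Real.rpow_mul (le_of_lt hL)]
        have id1 : σ*t = (n:ℝ)/m := by
          rw [ht]
          field_simp
        have id2 : -((m:ℝ)*σ)*(1-t) = -e := by
          have h' : (m:ℝ)*σ*t = (n:ℝ) := by
            rw [ht]
            field_simp
          have hexp : -((m:ℝ)*σ)*(1-t) = -((m:ℝ)*σ) + (m:ℝ)*σ*t := by ring
          rw [hexp, h', hmσ]
          ring
        have id3 : A0 ^ ((1-σ)*t) * A0 ^ (1-t) = A0 ^ (((m:ℝ)-(n:ℝ))/m) := by
          rw [← Real.rpow_add' (hann 0) (by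
            have hlt : (n:ℝ) < (m:ℝ) := by exact_mod_cast hnm
            have heq : (1-σ)*t + (1-t) = 1 - σ*t := by ring
            rw [heq, id1]
            have : 0 < 1 - (n:ℝ)/m := by
              rw [sub_pos, div_lt_one hmR]
              exact hlt
            exact ne_of_gt this)]
          congr 1
          have heq : (1-σ)*t + (1-t) = 1 - σ*t := by ring
          rw [heq, id1]
          field_simp
        rw [eA, eB, id1, id2]
        calc L ^ (-e) * X1
            = L ^ (-e) * (A0 ^ (((m:ℝ)-(n:ℝ))/m) * Am ^ ((n:ℝ)/m)) := by rw [hX1]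
          _ = Am ^ ((n:ℝ)/m) * (A0 ^ (((m:ℝ)-(n:ℝ))/m)) * L ^ (-e) := by ring
          _ = Am ^ ((n:ℝ)/m) * (A0 ^ ((1-σ)*t) * A0 ^ (1-t)) * L ^ (-e) := by rw [id3]
          _ = Am ^ ((n:ℝ)/m) * A0 ^ ((1-σ)*t) * (L ^ (-e) * A0 ^ (1-t)) := by ring
      have amgm : A' ^ t * B' ^ (1-t) ≤ t * A' + (1-t) * B' :=
        Real.geom_mean_le_arith_mean2_weighted ht0 (by linarith) hA'nn hB'nn (by ring)
      have last : t * A' + (1-t) * B' ≤ A' + B' := by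
        have l1 : t * A' ≤ A' := mul_le_of_le_one_left hA'nn ht1
        have l2 : (1-t) * B' ≤ B' := mul_le_of_le_one_left hB'nn (by linarith)
        linarith
      calc L ^ (-e) * a n ≤ L ^ (-e) * X1 := step
        _ = A' ^ t * B' ^ (1-t) := key
        _ ≤ t * A' + (1-t) * B' := amgm
        _ ≤ A' + B' := last
  -- combine
  have final : Qn ^ (1/p) ≤ 3 * A' + B' := by
    calc Qn ^ (1/p) ≤ (I n / L) ^ e * a n ^ (2/p) + (2*FG) ^ e * a n ^ (2/p) := hT
      _ = L ^ (-e) * a n + (2*FG) ^ e * a n ^ (2/p) := by rw [hT1]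
      _ ≤ (A' + B') + 2 * A' := add_le_add hT1b hT2
      _ = 3 * A' + B' := by ring
  -- identify the right-hand side
  have hIm : I m = Ig γ (fun x => (aDn γ m u x)^2) := by simp only [hI]
  have hI0 : I 0 = Ig γ (fun x => (u x)^2) := rfl
  have hrhs1 : (Ig γ (fun x => (aDn γ m u x)^2)) ^ (σ/2) = Am ^ σ := by
    rw [← hIm]
    calc (I m) ^ (σ/2) = (I m) ^ ((1/2)*σ) := by congr 1; ring
      _ = (I m ^ ((1:ℝ)/2)) ^ σ := Real.rpow_mul (hInn m) _ _
      _ = Am ^ σ := rfl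
  have hrhs2 : (Ig γ (fun x => (u x)^2)) ^ ((1-σ)/2) = A0 ^ (1-σ) := by
    rw [← hI0]
    calc (I 0) ^ ((1-σ)/2) = (I 0) ^ ((1/2)*(1-σ)) := by congr 1; ring
      _ = (I 0 ^ ((1:ℝ)/2)) ^ (1-σ) := Real.rpow_mul (hInn 0) _ _
      _ = A0 ^ (1-σ) := rfl
  have hrhs3 : (Ig γ (fun x => (u x)^2)) ^ ((1:ℝ)/2) = A0 := by
    rw [← hI0]
  rw [hrhs1, hrhs2, hrhs3]
  calc Qn ^ (1/p) ≤ 3 * A' + B' := final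
    _ = 3 * Am ^ σ * A0 ^ (1-σ) + 1 * L ^ (-((m:ℝ)*σ)) * A0 := by
        rw [hA', hB']; ring

end curve3

/-- Proposition 3.5 (Gagliardo–Nirenberg interpolation inequalities on closed curves,
finite `p`), with `σ = (n + 1/2 - 1/p)/m`. -/
theorem prop_3_5 (n m : ℕ) (hm : 1 ≤ m) (hnm : n < m) (p : ℝ) (hp : 2 ≤ p) :
    ∃ C B : ℝ, 0 < C ∧ 0 < B ∧
      ∀ (γ : ℝ → E2), IsClosedCurve γ →
      ∀ (u : ℝ → ℝ), ContDiff ℝ (⊤ : ℕ∞) u → Function.Periodic u (2 * π) →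
        (Ig γ (fun x => |aDn γ n u x| ^ p)) ^ (1 / p)
          ≤ C * (Ig γ (fun x => (aDn γ m u x) ^ 2)) ^ ((((n : ℝ) + 1/2 - 1/p) / m) / 2)
              * (Ig γ (fun x => (u x) ^ 2)) ^ ((1 - ((n : ℝ) + 1/2 - 1/p) / m) / 2)
            + B * (len γ) ^ (-((m : ℝ) * ((((n : ℝ) + 1/2 - 1/p)) / m)))
              * (Ig γ (fun x => (u x) ^ 2)) ^ ((1 : ℝ) / 2) :=
  ⟨3, 1, by norm_num, by norm_num, fun γ hγ u hu hup => main_est hγ n m hm hnm p hp u hu hup⟩
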